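/- Let H₀ be a finite-rank free ℤ-module, K a commutative ring with unit, H = H₀ ⊗ K, and T̂ the completed tensor algebra on H. Identify Λ²H₀ with the submodule of H₀^{⊗2} spanned by elements X'Y' − Y'X'. If v'₀ ∈ Λ²H₀ is primitive as an element of H₀^{⊗2}, and v₀ = v'₀ ⊗ 1 ∈ H^{⊗2}, then {u ∈ T̂ : v₀u = uv₀} = K[[v₀]]. -/

import Mathlib

/-! We model the completed tensor algebra `T̂ = ∏ₘ H^{⊗m}` of a free module `H`
with basis `ι` concretely: an element of `T̂` is a function assigning to each
word in the alphabet `ι` its coefficient.  Addition and scalar multiplication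
are pointwise, and multiplication is the convolution over splittings of a word.
The free `ℤ`-module `H₀` is modelled as `ι →₀ ℤ`, and `H₀^{⊗2}` as
`(ι × ι) →₀ ℤ`; the submodule `Λ²H₀ ⊆ H₀^{⊗2}` spanned by the elements
`X'Y' − Y'X'` is exactly the submodule of antisymmetric tensors. -/

/-- The completed tensor algebra on the free module with basis `ι`,
coefficients in `K`. -/
abbrev NCSeries (ι K : Type*) := List ι → K

variable {ι K : Type*} [CommRing K]

/-- The unit of `T̂`. -/
def oneNC : NCSeries ι K := fun w =>
  match w with
  | [] => 1
  | _ => 0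

/-- The multiplication of `T̂`. -/
def mulNC (f g : NCSeries ι K) : NCSeries ι K := fun w =>
  ∑ k ∈ Finset.range (w.length + 1), f (w.take k) * g (w.drop k)

/-- Powers in `T̂`. -/
def pwNC (X : NCSeries ι K) : ℕ → NCSeries ι K
  | 0 => oneNC
  | n + 1 => mulNC X (pwNC X n)

/-- The element of `T̂` of degree 2 determined by an element `v'₀` of
`H₀^{⊗2} = (ι × ι) →₀ ℤ`, i.e. the image `v₀ = v'₀ ⊗ 1 ∈ H^{⊗2} ⊆ T̂`. -/
def degreeTwo (v' : ι × ι →₀ ℤ) : NCSeries ι K := fun w =>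
  match w with
  | [i, j] => (v' (i, j) : K)
  | _ => 0

/-- The formal power series `Σₙ aₙ v₀ⁿ ∈ K[[v₀]]` (the sum is componentwise
finite whenever `v₀` has vanishing constant term). -/
def seriesInNC (a : ℕ → K) (X : NCSeries ι K) : NCSeries ι K := fun w =>
  ∑ n ∈ Finset.range (w.length + 1), a n * pwNC X n w

/-!
Write `c (i, j)` for the coefficient of `v₀` on the word `ij`. Comparing coefficients,
`v₀ u = u v₀` says `c (i, j) * u y = u z * c (a, b)` whenever `ijy = zab`. Primitivity gives
weights `μ` with `∑ μ_p c_p = 1`, and contracting with them on the right,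
`u (ijy) = c (i, j) * D y` and `u (zab) = D z * c (a, b)` with `D y = ∑ μ_p u (y p)`;
hence `D` commutes with `v₀` as well, and peeling off pairs by induction shows that
`u` is `Dˢ u []` times the coefficient of `v₀ˢ` on words of length `2s`. On a single letter,
`c (i, j) * u k = u i * c (j, k)` together with the antisymmetry of `c` gives
`c (p, q) ^ 2 * u k = 0`, and as the `c (p, q)` generate the unit ideal, `u k = 0`;
so `u` vanishes on all words of odd length.
-/

section DegreeTwo

variable (v' : ι × ι →₀ ℤ) (u : NCSeries ι K)

theorem degreeTwo_apply_of_length_ne_two {w : List ι} (h : w.length ≠ 2) :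
    (degreeTwo v' : NCSeries ι K) w = 0 := by
  match w with
  | [] | [_] | _ :: _ :: _ :: _ => rfl
  | [_, _] => simp at h

theorem mulNC_degreeTwo_cons_cons (i j : ι) (y : List ι) :
    mulNC (degreeTwo v') u (i :: j :: y) = (v' (i, j) : K) * u y := by
  rw [mulNC, Finset.sum_eq_single 2]
  · rfl
  · intro k hk _
    rw [degreeTwo_apply_of_length_ne_two _ (by simp at hk ⊢; omega), zero_mul]
  · simp

theorem mulNC_degreeTwo_append_pair (z : List ι) (a b : ι) :
    mulNC u (degreeTwo v') (z ++ [a, b]) = u z * (v' (a, b) : K) := by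
  rw [mulNC, Finset.sum_eq_single z.length]
  · rw [List.take_left, List.drop_left]
    rfl
  · intro k hk _
    rw [degreeTwo_apply_of_length_ne_two _ (by simp at hk ⊢; omega), mul_zero]
  · simp

theorem mulNC_degreeTwo_left_of_length_le_one {w : List ι} (h : w.length ≤ 1) :
    mulNC (degreeTwo v') u w = 0 :=
  Finset.sum_eq_zero fun k hk => by
    rw [degreeTwo_apply_of_length_ne_two _ (by simp; omega), zero_mul]

theorem mulNC_degreeTwo_right_of_length_le_one {w : List ι} (h : w.length ≤ 1) :
    mulNC u (degreeTwo v') w = 0 :=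
  Finset.sum_eq_zero fun k hk => by
    rw [degreeTwo_apply_of_length_ne_two _ (by simp; omega), mul_zero]

end DegreeTwo

theorem List.exists_cons_cons_eq_append_pair (i j : ι) (y : List ι) :
    ∃ z a b, i :: j :: y = z ++ [a, b] := by
  induction y generalizing i j with
  | nil => exact ⟨[], i, j, rfl⟩
  | cons k y ih =>
    obtain ⟨z, a, b, h⟩ := ih j k
    exact ⟨i :: z, a, b, by rw [h]; rfl⟩

/-- Coefficientwise form of `v * u = u * v`, for `v` the element of degree two with
coefficient `c (i, j)` on the word `[i, j]`. -/
def CommutesWithPairs (c : ι × ι → K) (u : NCSeries ι K) : Prop :=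
  ∀ ⦃i j a b : ι⦄ ⦃y z : List ι⦄,
    i :: j :: y = z ++ [a, b] → c (i, j) * u y = u z * c (a, b)

theorem mulNC_degreeTwo_comm_iff (v' : ι × ι →₀ ℤ) (u : NCSeries ι K) :
    mulNC (degreeTwo v') u = mulNC u (degreeTwo v') ↔
      CommutesWithPairs (fun p => (v' p : K)) u := by
  constructor
  · intro h i j a b y z hw
    have := congrFun h (i :: j :: y)
    rwa [mulNC_degreeTwo_cons_cons, hw, mulNC_degreeTwo_append_pair] at this
  · intro h
    funext w
    match w with
    | [] | [_] =>
      rw [mulNC_degreeTwo_left_of_length_le_one _ _ (by simp),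
        mulNC_degreeTwo_right_of_length_le_one _ _ (by simp)]
    | i :: j :: y =>
      obtain ⟨z, a, b, hw⟩ := List.exists_cons_cons_eq_append_pair i j y
      rw [mulNC_degreeTwo_cons_cons, hw, mulNC_degreeTwo_append_pair]
      exact h hw

/-- The coefficient on `w` of `v ^ (w.length / 2)`, for `v` the degree-two element with
coefficients `c`; it is `0` on words of odd length. -/
def pairProd (c : ι × ι → K) : List ι → K
  | [] => 1
  | [_] => 0
  | i :: j :: w => c (i, j) * pairProd c w

theorem pairProd_append_pair (c : ι × ι → K) (z : List ι) (a b : ι) :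
    pairProd c (z ++ [a, b]) = pairProd c z * c (a, b) := by
  induction z using pairProd.induct with
  | case1 => simp [pairProd]
  | case2 => simp [pairProd]
  | case3 i j w ih => simp [pairProd, ih, mul_assoc]

theorem pwNC_degreeTwo_apply (v' : ι × ι →₀ ℤ) (n : ℕ) (w : List ι) :
    pwNC (degreeTwo v') n w =
      if w.length / 2 = n then pairProd (fun p => (v' p : K)) w else 0 := by
  induction n generalizing w with
  | zero =>
    match w with
    | [] | [_] | _ :: _ :: _ => simp [pwNC, oneNC, pairProd]
  | succ n ih =>
    match w with
    | [] | [_] => rw [pwNC, mulNC_degreeTwo_left_of_length_le_one _ _ (by simp), if_neg (by simp)]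
    | i :: j :: y =>
      rw [pwNC, mulNC_degreeTwo_cons_cons, ih]
      simp only [List.length_cons, pairProd]
      split_ifs <;> first | omega | ring

theorem seriesInNC_degreeTwo (v' : ι × ι →₀ ℤ) (a : ℕ → K) :
    seriesInNC a (degreeTwo v') =
      fun w => a (w.length / 2) * pairProd (fun p => (v' p : K)) w := by
  funext w
  simp only [seriesInNC, pwNC_degreeTwo_apply, mul_ite, mul_zero, Finset.sum_ite_eq,
    Finset.mem_range]
  exact if_pos (by omega)

theorem commutesWithPairs_pairProd (c : ι × ι → K) (a : ℕ → K) :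
    CommutesWithPairs c fun w => a (w.length / 2) * pairProd c w := by
  intro i j a' b' y z hw
  have hlen : y.length = z.length := by simpa using congrArg List.length hw
  have hprod := congrArg (pairProd c) hw
  rw [pairProd_append_pair, pairProd] at hprod
  dsimp only
  rw [hlen]
  linear_combination a (z.length / 2) * hprod

def contractPairRight [Fintype ι] (μ : ι × ι → K) (u : NCSeries ι K) : NCSeries ι K :=
  fun y => ∑ p : ι × ι, μ p * u (y ++ [p.1, p.2])

section Unimodular

variable [Fintype ι] {c μ : ι × ι → K} (hμ : ∑ p, μ p * c p = 1) {u : NCSeries ι K}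
include hμ

theorem sum_mul_mul_eq_of_sum_mul_eq_one (x : K) : ∑ p, μ p * (c p * x) = x := by
  simp only [← mul_assoc, ← Finset.sum_mul, hμ, one_mul]

theorem span_range_eq_top_of_sum_mul_eq_one : Ideal.span (Set.range c) = ⊤ :=
  (Ideal.eq_top_iff_one _).2 <| hμ ▸
    Ideal.sum_mem _ fun p _ => Ideal.mul_mem_left _ _ (Ideal.subset_span ⟨p, rfl⟩)

namespace CommutesWithPairs

theorem apply_cons_cons (hu : CommutesWithPairs c u) (i j : ι) (y : List ι) :
    u (i :: j :: y) = c (i, j) * contractPairRight μ u y := by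
  calc u (i :: j :: y) = ∑ p, μ p * (c p * u (i :: j :: y)) :=
        (sum_mul_mul_eq_of_sum_mul_eq_one hμ _).symm
    _ = ∑ p, μ p * (c (i, j) * u (y ++ [p.1, p.2])) := by
        refine Finset.sum_congr rfl fun p _ => ?_
        rw [mul_comm (c p),
          hu (show i :: j :: (y ++ [p.1, p.2]) = (i :: j :: y) ++ [p.1, p.2] from rfl)]
    _ = c (i, j) * contractPairRight μ u y := by
        simp only [contractPairRight, Finset.mul_sum]
        exact Finset.sum_congr rfl fun p _ => by ring

theorem apply_append_pair (hu : CommutesWithPairs c u) (z : List ι) (a b : ι) :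
    u (z ++ [a, b]) = contractPairRight μ u z * c (a, b) := by
  calc u (z ++ [a, b]) = ∑ p, μ p * (c p * u (z ++ [a, b])) :=
        (sum_mul_mul_eq_of_sum_mul_eq_one hμ _).symm
    _ = ∑ p, μ p * (c p * (contractPairRight μ u z * c (a, b))) := by
        refine Finset.sum_congr rfl fun p _ => ?_
        rw [hu (show p.1 :: p.2 :: (z ++ [a, b]) = (p.1 :: p.2 :: z) ++ [a, b] from rfl),
          apply_cons_cons hμ hu, mul_assoc]
    _ = contractPairRight μ u z * c (a, b) := sum_mul_mul_eq_of_sum_mul_eq_one hμ _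

theorem contractPairRight (hu : CommutesWithPairs c u) :
    CommutesWithPairs c (_root_.contractPairRight μ u) := by
  intro i j a b y z hw
  rw [← apply_cons_cons hμ hu, hw, apply_append_pair hμ hu]

theorem apply_singleton (hdiag : ∀ i, c (i, i) = 0) (hskew : ∀ i j, c (j, i) = -c (i, j))
    (hu : CommutesWithPairs c u) (k : ι) : u [k] = 0 := by
  have hcycle : ∀ i j m : ι, c (i, j) * u [m] = u [i] * c (j, m) := fun i j m => hu rfl
  have hsq : ∀ p : ι × ι, c p ^ 2 * u [k] = 0 := fun ⟨p, q⟩ => by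
    calc c (p, q) ^ 2 * u [k] = -(c (p, q) * (c (q, p) * u [k])) := by rw [hskew]; ring
      _ = -(c (p, q) * u [q] * c (p, k)) := by rw [hcycle]; ring
      _ = 0 := by rw [hcycle, hdiag]; ring
  have hbot := Submodule.mem_of_span_top_of_smul_mem ⊥ _
    (Ideal.span_pow_eq_top _ (span_range_eq_top_of_sum_mul_eq_one hμ) 2) (u [k])
    (by rintro ⟨_, _, ⟨p, rfl⟩, rfl⟩; simpa using hsq p)
  simpa using hbot

theorem apply_eq (hdiag : ∀ i, c (i, i) = 0) (hskew : ∀ i j, c (j, i) = -c (i, j))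
    (hu : CommutesWithPairs c u) (w : List ι) :
    u w = (_root_.contractPairRight μ)^[w.length / 2] u [] * pairProd c w := by
  induction w using pairProd.induct generalizing u with
  | case1 => simp [pairProd]
  | case2 k => simp [pairProd, hu.apply_singleton hμ hdiag hskew]
  | case3 i j y ih =>
    rw [apply_cons_cons hμ hu, ih (hu.contractPairRight hμ)]
    simp only [List.length_cons, pairProd, show (y.length + 2) / 2 = y.length / 2 + 1 by omega,
      Function.iterate_succ_apply]
    ring

end CommutesWithPairs

theorem commutesWithPairs_iff (hdiag : ∀ i, c (i, i) = 0)
    (hskew : ∀ i j, c (j, i) = -c (i, j)) :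
    CommutesWithPairs c u ↔ ∃ a : ℕ → K, u = fun w => a (w.length / 2) * pairProd c w := by
  constructor
  · intro hu
    exact ⟨fun s => (contractPairRight μ)^[s] u [],
      funext (CommutesWithPairs.apply_eq hμ hdiag hskew hu)⟩
  · rintro ⟨a, rfl⟩
    exact commutesWithPairs_pairProd c a

end Unimodular

theorem LinearMap.sum_map_single_one_mul {σ : Type*} [Fintype σ]
    (φ : (σ →₀ ℤ) →ₗ[ℤ] ℤ) (v : σ →₀ ℤ) : ∑ s, φ (Finsupp.single s 1) * v s = φ v := by
  conv_rhs => rw [← Finsupp.univ_sum_single v]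
  simp only [map_sum, ← Finsupp.smul_single_one _ (v _), map_smul, smul_eq_mul, mul_comm]

/-- let `H₀` be a finite-rank free `ℤ`-module (modelled as
`ι →₀ ℤ`, `ι` finite), `K` a commutative ring, and `v'₀ ∈ Λ²H₀ ⊆ H₀^{⊗2}`
(i.e. an antisymmetric tensor) which is primitive as an element of `H₀^{⊗2}`.
Then the centralizer in `T̂` of `v₀ = v'₀ ⊗ 1 ∈ H^{⊗2}` is exactly the ring
`K[[v₀]]` of formal power series in `v₀`. -/
theorem centralizer_primitive_lambdaTwo_eq_powerSeries
    [Fintype ι] (v' : ι × ι →₀ ℤ)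
    (hanti : ∀ i j : ι, v' (i, j) = -v' (j, i))
    (hprim : ∃ φ : (ι × ι →₀ ℤ) →ₗ[ℤ] ℤ, φ v' = 1) :
    {u : NCSeries ι K | mulNC (degreeTwo v') u = mulNC u (degreeTwo v')} =
      {u : NCSeries ι K | ∃ a : ℕ → K, u = seriesInNC a (degreeTwo v')} := by
  obtain ⟨φ, hφ⟩ := hprim
  have hμ : ∑ p, (φ (Finsupp.single p 1) : K) * (v' p : K) = 1 := by
    exact_mod_cast congrArg (Int.cast : ℤ → K) ((φ.sum_map_single_one_mul v').trans hφ)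
  have hdiag : ∀ i, (v' (i, i) : K) = 0 := fun i => by
    simp [show v' (i, i) = 0 by linarith [hanti i i]]
  have hskew : ∀ i j, (v' (j, i) : K) = -(v' (i, j) : K) := fun i j => by
    simp [hanti j i]
  ext u
  simp only [Set.mem_ofPred_eq, mulNC_degreeTwo_comm_iff, seriesInNC_degreeTwo]
  exact commutesWithPairs_iff hμ hdiag hskew
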